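/- Let Δ ≥ 2. For every connected infinite Δ-regular graph G, Ω_{T_Δ} ⊆ Ω_G; that is, the epidemic region of the infinite Δ-regular tree is the minimum epidemic region among all connected infinite Δ-regular graphs: whenever strategy A becomes epidemic in (T_Δ, q, r), it also becomes epidemic in (G, q, r). -/

import Mathlib

namespace Contagion

open scoped BigOperators

/-- The three strategies in the contagion game. -/
inductive Strat
  | A | B | AB
deriving DecidableEq

/-- Pairwise payoff to a player using the first strategy against a neighbor
using the second strategy, in the contagion game with parameters `q, r`. -/
noncomputable def pairPayoff (q r : ℝ) : Strat → Strat → ℝ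
  | .A, .A => 1 - q
  | .A, .B => 0
  | .A, .AB => 1 - q
  | .B, .A => 0
  | .B, .B => q
  | .B, .AB => q
  | .AB, .A => 1 - q - r
  | .AB, .B => q - r
  | .AB, .AB => max q (1 - q) - r

variable {V : Type*}

/-- Total payoff to vertex `v` for playing strategy `s` against profile `σ`. -/
noncomputable def totalPayoff (G : SimpleGraph V) (q r : ℝ) (σ : V → Strat)
    (v : V) (s : Strat) : ℝ :=
  ∑ᶠ u ∈ G.neighborSet v, pairPayoff q r s (σ u)

/-- `s` is a best response of vertex `v` to the profile `σ`. -/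
def IsBestResponse (G : SimpleGraph V) (q r : ℝ) (σ : V → Strat) (v : V) (s : Strat) : Prop :=
  ∀ s' : Strat, totalPayoff G q r σ v s' ≤ totalPayoff G q r σ v s

/-- Strategy `A` becomes epidemic in the contagion game `(G, q, r)`:
there are a finite initial set `S₀` (playing `A`, everybody else playing `B`) and a
sequence `α` of vertices in which every vertex appears at least once, such that updating
at step `n` the vertex `α n` to a best response makes every vertex eventually adopt `A`. -/
def Epidemic (G : SimpleGraph V) (q r : ℝ) : Prop :=
  ∃ (S₀ : Set V) (α : ℕ → V) (σ : ℕ → V → Strat),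
    S₀.Finite ∧
    Function.Surjective α ∧
    (∀ v ∈ S₀, σ 0 v = Strat.A) ∧
    (∀ v ∉ S₀, σ 0 v = Strat.B) ∧
    (∀ n, IsBestResponse G q r (σ n) (α n) (σ (n + 1) (α n))) ∧
    (∀ n v, v ≠ α n → σ (n + 1) v = σ n v) ∧
    (∀ v, ∃ n, σ n v = Strat.A)

/-- The epidemic region `Ω_G ⊆ ℝ²` of `G`. -/
def epidemicRegion (G : SimpleGraph V) : Set (ℝ × ℝ) :=
  {p | 0 < p.1 ∧ p.1 < 1 ∧ 0 < p.2 ∧ Epidemic G p.1 p.2}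

/-- `G` is `Δ`-regular: every vertex has exactly `Δ` neighbors. -/
def IsRegular (G : SimpleGraph V) (Δ : ℕ) : Prop :=
  ∀ v, (G.neighborSet v).ncard = Δ

/-- The number of neighbors of `v` lying in the set `S`. -/
noncomputable def degIn (G : SimpleGraph V) (v : V) (S : Set V) : ℕ :=
  (G.neighborSet v ∩ S).ncard

/-- `RT Δ`: the infinite rooted tree in which the root (the empty list) has `Δ - 1`
children and every other vertex also has `Δ - 1` children (hence degree `Δ`). -/
def RT (Δ : ℕ) : SimpleGraph (List (Fin (Δ - 1))) :=
  SimpleGraph.fromRel (fun l l' => ∃ a : Fin (Δ - 1), l' = a :: l)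

/-- `G` contains a subgraph isomorphic to `RT Δ`. -/
def HasRTCopy (Δ : ℕ) (G : SimpleGraph V) : Prop :=
  ∃ f : List (Fin (Δ - 1)) → V,
    Function.Injective f ∧ ∀ x y, (RT Δ).Adj x y → G.Adj (f x) (f y)

/-- The thick half line `HL_Δ` (for even `Δ`), columns indexed by `ℕ` starting with the
first column `0`; `(k, i)` and `(l, j)` are adjacent exactly when `|k - l| = 1`. -/
def HL (Δ : ℕ) : SimpleGraph (ℕ × Fin (Δ / 2)) :=
  SimpleGraph.fromRel (fun x y => y.1 = x.1 + 1)

/-- The epidemic region of the infinite `Δ`-regular tree: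
`{(q,r) : q,r > 0, r ≥ ((Δ-1)/Δ)q, q ≤ 1/Δ} ∪ {(q,r) : q,r > 0, 2q + Δr ≤ 1}`. -/
def treeRegion (Δ : ℕ) : Set (ℝ × ℝ) :=
  {p | 0 < p.1 ∧ 0 < p.2 ∧ ((Δ : ℝ) - 1) / Δ * p.1 ≤ p.2 ∧ p.1 ≤ 1 / Δ} ∪
  {p | 0 < p.1 ∧ 0 < p.2 ∧ 2 * p.1 + Δ * p.2 ≤ 1}

/-- The epidemic region of the thick line `L_Δ`:
`{(q,r) : 0 < q ≤ 1/2, r ≥ q/2} ∪ {(q,r) : q,r > 0, r ≤ q/2, 2q + 2r ≤ 1}`. -/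
def thickLineRegion : Set (ℝ × ℝ) :=
  {p | 0 < p.1 ∧ p.1 ≤ 1 / 2 ∧ p.1 / 2 ≤ p.2} ∪
  {p | 0 < p.1 ∧ 0 < p.2 ∧ p.2 ≤ p.1 / 2 ∧ 2 * p.1 + 2 * p.2 ≤ 1}

/-- `(SAB, SB)` is a blocking structure for the contagion game `(G, q, r)`
on a `Δ`-regular graph `G`. -/
def IsBlockingStructure (G : SimpleGraph V) (Δ : ℕ) (q r : ℝ) (SAB SB : Set V) : Prop :=
  Disjoint SAB SB ∧ (SAB.Nonempty ∨ SB.Nonempty) ∧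
  (∀ v ∈ SAB, r / q * Δ < (degIn G v SB : ℝ)) ∧
  ∀ v ∈ SB,
    (1 - q - r) * Δ < (1 - q) * (degIn G v SB : ℝ) + min q (1 - q) * (degIn G v SAB : ℝ) ∧
    (1 - q) * Δ < (degIn G v SB : ℝ) + q * (degIn G v SAB : ℝ)

/-- The two strategies of the `A`-`B` coordination game. -/
inductive CStrat
  | A | B
deriving DecidableEq

/-- Pairwise payoff in the `A`-`B` coordination game `(G, q)`. -/
noncomputable def cPairPayoff (q : ℝ) : CStrat → CStrat → ℝ
  | .A, .A => 1 - q
  | .A, .B => 0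
  | .B, .A => 0
  | .B, .B => q

/-- Total payoff to `v` for playing `s` against profile `σ` in the coordination game. -/
noncomputable def cTotalPayoff (G : SimpleGraph V) (q : ℝ) (σ : V → CStrat)
    (v : V) (s : CStrat) : ℝ :=
  ∑ᶠ u ∈ G.neighborSet v, cPairPayoff q s (σ u)

/-- `s` is a best response of `v` to `σ` in the coordination game. -/
def CIsBestResponse (G : SimpleGraph V) (q : ℝ) (σ : V → CStrat) (v : V) (s : CStrat) : Prop :=
  ∀ s' : CStrat, cTotalPayoff G q σ v s' ≤ cTotalPayoff G q σ v s

/-- Strategy `A` becomes epidemic in the coordination game `(G, q)` starting from the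
initial set `S₀`. -/
def CoordEpidemicFrom (G : SimpleGraph V) (q : ℝ) (S₀ : Set V) : Prop :=
  ∃ (α : ℕ → V) (σ : ℕ → V → CStrat),
    Function.Surjective α ∧
    (∀ v ∈ S₀, σ 0 v = CStrat.A) ∧
    (∀ v ∉ S₀, σ 0 v = CStrat.B) ∧
    (∀ n, CIsBestResponse G q (σ n) (α n) (σ (n + 1) (α n))) ∧
    (∀ n v, v ≠ α n → σ (n + 1) v = σ n v) ∧
    (∀ v, ∃ n, σ n v = CStrat.A)

/-- Strategy `A` becomes epidemic in the coordination game `(G, q)`. -/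
def CoordEpidemic (G : SimpleGraph V) (q : ℝ) : Prop :=
  ∃ S₀ : Set V, S₀.Finite ∧ CoordEpidemicFrom G q S₀

end Contagion

/-!
Outside the tree region, `A` cannot spread on `T_Δ`. Root the tree at any vertex and let `R`
exceed the depth of the finite seed set. A vertex at depth at least `R` has at most one neighbour,
its parent, that does not play `B`; the inequalities cutting out the complement of the region then
forbid it to adopt `A`, and at depth greater than `R` they force it to play `B`. This confinement
is preserved by every best-response update, so the vertices far from the root never adopt `A`.

Inside the tree region, `A` spreads on every connected `Δ`-regular graph. Seed the neighbours of
a vertex `v₀` and sweep the balls around `v₀` of growing radius. Each vertex is updated only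
after one of its neighbours has switched away from `B`, which makes `A` a best response (or,
when `2q + Δr ≤ 1`, the better of `A` and `AB`), and a vertex visited once all its neighbours
have been updated has no `B`-neighbour left and switches to `A`.
-/

namespace SimpleGraph

variable {V : Type*} {G : SimpleGraph V} {s v : V}

theorem Reachable.exists_adj_dist_lt (h : G.Reachable s v) (hsv : s ≠ v) :
    ∃ u, G.Adj v u ∧ G.dist s u < G.dist s v := by
  obtain ⟨p, hp⟩ := h.symm.exists_walk_length_eq_dist
  cases p with
  | nil => exact absurd rfl hsv
  | cons hadj p =>
    refine ⟨_, hadj, ?_⟩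
    rw [dist_comm, dist_comm (u := s), ← hp, Walk.length_cons]
    exact Nat.lt_succ_of_le (dist_le p)

theorem Preconnected.finite_setOf_dist_le (hG : G.Preconnected)
    (hfin : ∀ v, (G.neighborSet v).Finite) (s : V) (n : ℕ) : {v | G.dist s v ≤ n}.Finite := by
  induction n with
  | zero =>
    refine (Set.finite_singleton s).subset fun v hv => ?_
    exact ((hG s v).dist_eq_zero_iff.1 (Nat.le_zero.1 hv)).symm
  | succ n ih =>
    refine (ih.union (ih.biUnion fun u _ => hfin u)).subset fun v hv => ?_
    obtain rfl | hsv := eq_or_ne s v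
    · simp
    have hv : G.dist s v ≤ n + 1 := hv
    obtain ⟨u, hadj, hu⟩ := (hG s v).exists_adj_dist_lt hsv
    exact Or.inr (Set.mem_biUnion (show G.dist s u ≤ n by omega) hadj.symm)

theorem Preconnected.exists_lt_dist [Infinite V] (hG : G.Preconnected)
    (hfin : ∀ v, (G.neighborSet v).Finite) (s : V) (n : ℕ) : ∃ v, n < G.dist s v := by
  simpa using (hG.finite_setOf_dist_le hfin s n).exists_notMem

theorem IsAcyclic.subsingleton_neighborSet_dist_le (hG : G.IsAcyclic) (h : G.Reachable s v) :
    {u ∈ G.neighborSet v | G.dist s u ≤ G.dist s v}.Subsingleton := by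
  classical
  obtain ⟨p, hp, -⟩ := h.exists_path_of_dist
  suffices hpen : ∀ u ∈ {u ∈ G.neighborSet v | G.dist s u ≤ G.dist s v}, u = p.penultimate from
    fun u hu w hw => (hpen u hu).trans (hpen w hw).symm
  rintro u ⟨hadj, hu⟩
  have hlt : G.dist s u < G.dist s v := hu.lt_of_ne (hG.dist_ne_of_adj hadj h).symm
  obtain ⟨p', hp', hlen'⟩ := (h.trans hadj.reachable).exists_path_of_dist
  have hv : v ∉ p'.support := fun hv => by
    have := dist_le (p'.takeUntil v hv)
    have := p'.length_takeUntil_le_length hv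
    omega
  exact hG.eq_penultimate_of_adj_end hp hadj
    (hG.mem_support_of_ne_mem_support_of_adj_of_isPath hp hp' hadj hv)

end SimpleGraph

/-- `f` is the concatenation `L 0 ++ L 1 ++ ⋯`, the block `L k` occupying the positions
`t k ≤ n < t (k + 1)`. -/
theorem List.exists_seq_concat {α : Type*} (L : ℕ → List α) (hL : ∀ k, L k ≠ []) :
    ∃ (f : ℕ → α) (t : ℕ → ℕ), Monotone t ∧ (∀ n, ∃ k, t k ≤ n ∧ f n ∈ L k) ∧
      ∀ k, ∀ x ∈ L k, ∃ n, t k ≤ n ∧ n < t (k + 1) ∧ f n = x := by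
  set P : ℕ → List α := fun k => (List.range k).flatMap L
  have hP (k : ℕ) : P (k + 1) = P k ++ L k := by simp [P, List.range_succ]
  set t : ℕ → ℕ := fun k => (P k).length
  have ht (k : ℕ) : t (k + 1) = t k + (L k).length := by simp [t, hP]
  have hkt (k : ℕ) : k ≤ t k := by
    induction k with
    | zero => exact Nat.zero_le _
    | succ k ih => have := List.length_pos_iff.2 (hL k); rw [ht]; omega
  have hpre {k m : ℕ} (hkm : k ≤ m) : P k <+: P m := by
    induction m, hkm using Nat.le_induction with
    | base => exact List.prefix_refl _
    | succ m _ ih => exact ih.trans (hP m ▸ List.prefix_append _ _)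
  let f (n : ℕ) : α := (P (n + 1))[n]'(Nat.lt_of_lt_of_le n.lt_succ_self (hkt _))
  have hf {m n : ℕ} (h : n < t m) : f n = (P m)[n] := by
    rcases le_total (n + 1) m with hm | hm
    · exact (hpre hm).getElem _
    · exact ((hpre hm).getElem h).symm
  have hblock {k n : ℕ} (hk : t k ≤ n) (hn : n < t (k + 1)) :
      f n = (L k)[n - t k]'(by rw [ht] at hn; omega) := by
    simp only [hf hn, hP, List.getElem_append_right hk]
    rfl
  refine ⟨f, t, monotone_nat_of_le_succ fun k => by rw [ht]; omega, fun n => ?_, ?_⟩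
  · have key : ∀ m, ∀ n < t m, ∃ k, t k ≤ n ∧ f n ∈ L k := by
      intro m
      induction m with
      | zero => simp [t, P]
      | succ m ih =>
        intro n hn
        rcases lt_or_ge n (t m) with h | h
        · exact ih n h
        · exact ⟨m, h, hblock h hn ▸ List.getElem_mem _⟩
    exact key (n + 1) n (Nat.lt_of_lt_of_le n.lt_succ_self (hkt _))
  · intro k x hx
    obtain ⟨j, hj, rfl⟩ := List.mem_iff_getElem.1 hx
    have hlt : t k + j < t (k + 1) := by rw [ht]; omega
    refine ⟨t k + j, by omega, hlt, ?_⟩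
    simp [hblock (Nat.le_add_right _ _) hlt]

namespace Contagion

variable {V : Type*}

section Neighbours

variable {G : SimpleGraph V} {v : V} {S : Set V}

theorem degIn_eq_card_filter (hv : (G.neighborSet v).Finite) (σ : V → Strat)
    (s : Strat) : degIn G v (σ ⁻¹' {s}) = (hv.toFinset.filter (σ · = s)).card := by
  rw [degIn, ← Set.ncard_coe_finset, Finset.coe_filter]
  simp only [Set.Finite.mem_toFinset]
  rfl

theorem Strat.mem_A_B_AB (s : Strat) : s ∈ ({.A, .B, .AB} : Finset Strat) := by
  cases s <;> simp

theorem degIn_add_degIn_add_degIn (hv : (G.neighborSet v).Finite) (σ : V → Strat) :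
    degIn G v (σ ⁻¹' {.A}) + degIn G v (σ ⁻¹' {.B}) + degIn G v (σ ⁻¹' {.AB}) =
      (G.neighborSet v).ncard := by
  rw [← hv.coe_toFinset, Set.ncard_coe_finset,
    Finset.card_eq_sum_card_fiberwise fun u _ => Strat.mem_A_B_AB (σ u)]
  simp [degIn_eq_card_filter hv, add_assoc]

theorem totalPayoff_eq (hv : (G.neighborSet v).Finite) (q r : ℝ) (σ : V → Strat) (s : Strat) :
    totalPayoff G q r σ v s =
      degIn G v (σ ⁻¹' {.A}) * pairPayoff q r s .A + degIn G v (σ ⁻¹' {.B}) * pairPayoff q r s .B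
        + degIn G v (σ ⁻¹' {.AB}) * pairPayoff q r s .AB := by
  rw [totalPayoff, finsum_mem_eq_finite_toFinset_sum _ hv,
    ← Finset.sum_fiberwise_of_maps_to fun u _ => Strat.mem_A_B_AB (σ u)]
  have fiber (t : Strat) : ∑ u ∈ hv.toFinset with σ u = t, pairPayoff q r s (σ u) =
      degIn G v (σ ⁻¹' {t}) * pairPayoff q r s t := by
    rw [Finset.sum_congr rfl fun u hu => by rw [(Finset.mem_filter.1 hu).2], Finset.sum_const,
      nsmul_eq_mul, degIn_eq_card_filter hv]
  simp [fiber, add_assoc]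

theorem degIn_eq_zero (h : ∀ u ∈ G.neighborSet v, u ∉ S) : degIn G v S = 0 := by
  rw [degIn, (Set.disjoint_left.2 h).inter_eq, Set.ncard_empty]

theorem degIn_lt_ncard (hv : (G.neighborSet v).Finite) (h : ∃ u ∈ G.neighborSet v, u ∉ S) :
    degIn G v S < (G.neighborSet v).ncard :=
  Set.ncard_lt_ncard ((Set.ssubset_iff_of_subset Set.inter_subset_left).2
    (h.imp fun _ hu => ⟨hu.1, fun h => hu.2 h.2⟩)) hv

theorem ncard_le_degIn_add_one (hv : (G.neighborSet v).Finite)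
    (h : (G.neighborSet v \ S).Subsingleton) : (G.neighborSet v).ncard ≤ degIn G v S + 1 := by
  rw [← Set.ncard_inter_add_ncard_sdiff_eq_ncard _ S hv]
  exact Nat.add_le_add_left ((Set.ncard_le_one h.finite).2 h) _

end Neighbours

section Regular

variable {G : SimpleGraph V} {Δ : ℕ}

theorem IsRegular.finite_neighborSet (hG : IsRegular G Δ) (hΔ : Δ ≠ 0) (v : V) :
    (G.neighborSet v).Finite :=
  Set.finite_of_ncard_ne_zero (hG v ▸ hΔ)

theorem IsRegular.nonempty_neighborSet (hG : IsRegular G Δ) (hΔ : Δ ≠ 0) (v : V) :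
    (G.neighborSet v).Nonempty :=
  Set.nonempty_of_ncard_ne_zero (hG v ▸ hΔ)

theorem IsRegular.sum_degIn (hG : IsRegular G Δ) (hΔ : Δ ≠ 0) (σ : V → Strat) (v : V) :
    (degIn G v (σ ⁻¹' {.A}) : ℝ) + degIn G v (σ ⁻¹' {.B}) + degIn G v (σ ⁻¹' {.AB}) = Δ := by
  exact_mod_cast (degIn_add_degIn_add_degIn (hG.finite_neighborSet hΔ v) σ).trans (hG v)

end Regular

section BestResponse

variable {G : SimpleGraph V} {Δ : ℕ} {q r : ℝ} {σ : V → Strat} {v : V}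

theorem isBestResponse_A_of_degIn_AB_eq_zero (hG : IsRegular G Δ) (hΔ : 2 ≤ Δ) (hq : 0 < q)
    (hqΔ : q * Δ ≤ 1) (hrq : q * (Δ - 1) ≤ r * Δ) (hAB : degIn G v (σ ⁻¹' {.AB}) = 0)
    (hB : degIn G v (σ ⁻¹' {.B}) < Δ) : IsBestResponse G q r σ v .A := by
  have hsum := hG.sum_degIn (by omega) σ v
  have hB' : (degIn G v (σ ⁻¹' {.B}) : ℝ) + 1 ≤ Δ := by exact_mod_cast hB
  have hΔ' : (2 : ℝ) ≤ Δ := by exact_mod_cast hΔ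
  have hmax : max q (1 - q) = 1 - q := max_eq_right (by nlinarith)
  simp only [hAB, Nat.cast_zero, add_zero] at hsum
  intro s
  cases s <;>
    simp only [totalPayoff_eq (hG.finite_neighborSet (by omega) v), pairPayoff, hmax, hAB,
      Nat.cast_zero, zero_mul, add_zero] <;>
    nlinarith [mul_le_mul_of_nonneg_left hB' hq.le]

/-- For `q ≤ 1/2` the payoffs of `A` and `AB` differ by `r Δ - q · #B-neighbours`,
so this rule plays the better of the two. -/
noncomputable def betterOfAAndAB (G : SimpleGraph V) (Δ : ℕ) (q r : ℝ) (τ : V → Strat)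
    (x : V) : Strat :=
  if q * degIn G x (τ ⁻¹' {.B}) ≤ r * Δ then .A else .AB

theorem isBestResponse_betterOfAAndAB (hG : IsRegular G Δ) (hΔ : Δ ≠ 0) (hq : 0 < q)
    (hr : 0 < r) (hqr : 2 * q + Δ * r ≤ 1) (hB : degIn G v (σ ⁻¹' {.B}) < Δ) :
    IsBestResponse G q r σ v (betterOfAAndAB G Δ q r σ v) := by
  have hsum := hG.sum_degIn hΔ σ v
  have hB' : (degIn G v (σ ⁻¹' {.B}) : ℝ) + 1 ≤ Δ := by exact_mod_cast hB
  have hq₂ : 0 ≤ 1 - 2 * q := by nlinarith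
  have hmax : max q (1 - q) = 1 - q := max_eq_right (by linarith)
  have hAAB : (1 : ℝ) ≤ degIn G v (σ ⁻¹' {.A}) + degIn G v (σ ⁻¹' {.AB}) := by linarith
  unfold betterOfAAndAB
  split_ifs <;> intro s <;> cases s <;>
    simp only [totalPayoff_eq (hG.finite_neighborSet hΔ v), pairPayoff, hmax] <;>
    nlinarith [(degIn G v (σ ⁻¹' {.A})).cast_nonneg (α := ℝ),
      (degIn G v (σ ⁻¹' {.AB})).cast_nonneg (α := ℝ), mul_le_mul_of_nonneg_left hAAB hq₂]

theorem IsBestResponse.ne_A (hG : IsRegular G Δ) (hΔ : 2 ≤ Δ) (hq : 0 < q)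
    (hqr : q * Δ ≤ 1 → r * Δ < q * (Δ - 1)) (hB : Δ ≤ degIn G v (σ ⁻¹' {.B}) + 1) {s : Strat}
    (hs : IsBestResponse G q r σ v s) : s ≠ .A := by
  rintro rfl
  have hsum := hG.sum_degIn (by omega) σ v
  have hB' : (Δ : ℝ) ≤ degIn G v (σ ⁻¹' {.B}) + 1 := by exact_mod_cast hB
  have hΔ' : (2 : ℝ) ≤ Δ := by exact_mod_cast hΔ
  have hpay := totalPayoff_eq (hG.finite_neighborSet (by omega) v) q r σ
  by_cases hqΔ : q * Δ ≤ 1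
  · have hmax : max q (1 - q) = 1 - q := max_eq_right (by nlinarith)
    have := hs .AB
    simp only [hpay, pairPayoff, hmax] at this
    nlinarith [hqr hqΔ, mul_le_mul_of_nonneg_left hB' hq.le]
  · have := hs .B
    simp only [hpay, pairPayoff] at this
    nlinarith [(degIn G v (σ ⁻¹' {.AB})).cast_nonneg (α := ℝ)]

theorem IsBestResponse.eq_B (hG : IsRegular G Δ) (hΔ : 2 ≤ Δ) (hr : 0 < r)
    (hqr₁ : 1 < 2 * q + Δ * r) (hqr₂ : q * Δ ≤ 1 → r * Δ < q * (Δ - 1))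
    (hA : degIn G v (σ ⁻¹' {.A}) = 0) (hB : Δ ≤ degIn G v (σ ⁻¹' {.B}) + 1) {s : Strat}
    (hs : IsBestResponse G q r σ v s) : s = .B := by
  have hsum := hG.sum_degIn (by omega) σ v
  have hB' : (Δ : ℝ) ≤ degIn G v (σ ⁻¹' {.B}) + 1 := by exact_mod_cast hB
  have hΔ' : (2 : ℝ) ≤ Δ := by exact_mod_cast hΔ
  have hq₁ : 1 < q * (Δ + 1) := by
    by_cases hqΔ : q * Δ ≤ 1
    · nlinarith [hqr₂ hqΔ]
    · nlinarith
  simp only [hA, Nat.cast_zero, zero_add] at hsum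
  have hpay := totalPayoff_eq (hG.finite_neighborSet (by omega) v) q r σ
  have hAB := (degIn G v (σ ⁻¹' {.AB})).cast_nonneg (α := ℝ)
  cases s with
  | A =>
    have := hs .B
    simp only [hpay, pairPayoff, hA, Nat.cast_zero, zero_mul, zero_add] at this
    nlinarith
  | B => rfl
  | AB =>
    have := hs .B
    simp only [hpay, pairPayoff, hA, Nat.cast_zero, zero_mul, zero_add] at this
    rcases le_total q (1 - q) with h | h
    · rw [max_eq_right h] at this; nlinarith
    · rw [max_eq_left h] at this; nlinarith

end BestResponse

section Tree

variable {G : SimpleGraph V} {Δ : ℕ} {q r : ℝ}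

def IsConfined (G : SimpleGraph V) (s₀ : V) (R : ℕ) (τ : V → Strat) : Prop :=
  (∀ v, R ≤ G.dist s₀ v → τ v ≠ .A) ∧ ∀ v, R < G.dist s₀ v → τ v = .B

theorem IsConfined.of_isBestResponse (hG : G.IsAcyclic) (hconn : G.Connected)
    (hreg : IsRegular G Δ) (hΔ : 2 ≤ Δ) (hq : 0 < q) (hr : 0 < r)
    (hqr₁ : 1 < 2 * q + Δ * r) (hqr₂ : q * Δ ≤ 1 → r * Δ < q * (Δ - 1))
    {s₀ : V} {R : ℕ} {τ τ' : V → Strat} {x : V} (hτ : IsConfined G s₀ R τ)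
    (hx : IsBestResponse G q r τ x (τ' x)) (hτ' : ∀ v ≠ x, τ' v = τ v) :
    IsConfined G s₀ R τ' := by
  obtain hxR | hRx := lt_or_ge (G.dist s₀ x) R
  · refine ⟨fun v hv => ?_, fun v hv => ?_⟩ <;> rw [hτ' v (by rintro rfl; omega)]
    exacts [hτ.1 v hv, hτ.2 v hv]
  -- only the neighbour of `x` towards `s₀` can play `A` or `AB`
  have hnonB : (G.neighborSet x \ τ ⁻¹' {.B}).Subsingleton :=
    (hG.subsingleton_neighborSet_dist_le (hconn s₀ x)).anti fun u ⟨hu, huB⟩ =>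
      ⟨hu, not_lt.1 fun h => huB (hτ.2 u (by omega))⟩
  have hB : Δ ≤ degIn G x (τ ⁻¹' {.B}) + 1 :=
    (hreg x).symm.trans_le (ncard_le_degIn_add_one (hreg.finite_neighborSet (by omega) x) hnonB)
  refine ⟨fun v hv => ?_, fun v hv => ?_⟩ <;> obtain rfl | hvx := eq_or_ne v x
  · exact hx.ne_A hreg hΔ hq hqr₂ hB
  · rw [hτ' v hvx]; exact hτ.1 v hv
  · refine hx.eq_B hreg hΔ hr hqr₁ hqr₂ (degIn_eq_zero fun u hu hA => hτ.1 u ?_ hA) hB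
    have := hconn.dist_triangle (u := s₀) (v := u) (w := v)
    have := SimpleGraph.dist_eq_one_iff_adj.2 (G.adj_symm hu)
    omega
  · rw [hτ' v hvx]; exact hτ.2 v hv

theorem not_epidemic_of_isAcyclic [Infinite V] (hG : G.IsAcyclic) (hconn : G.Connected)
    (hreg : IsRegular G Δ) (hΔ : 2 ≤ Δ) (hq : 0 < q) (hr : 0 < r)
    (hqr₁ : 1 < 2 * q + Δ * r) (hqr₂ : q * Δ ≤ 1 → r * Δ < q * (Δ - 1)) :
    ¬ Epidemic G q r := by
  rintro ⟨S₀, α, σ, hS₀, -, -, hB₀, hBR, hstay, hA⟩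
  obtain ⟨s₀⟩ := hconn.nonempty
  obtain ⟨R, hR⟩ := (hS₀.image (G.dist s₀)).bddAbove
  have hconf (n : ℕ) : IsConfined G s₀ (R + 1) (σ n) := by
    induction n with
    | zero =>
      have hB (v : V) (hv : R + 1 ≤ G.dist s₀ v) : σ 0 v = .B :=
        hB₀ v fun hvS => by have := hR ⟨v, hvS, rfl⟩; omega
      exact ⟨fun v hv => by simp [hB v hv], fun v hv => hB v hv.le⟩
    | succ n ih =>
      exact ih.of_isBestResponse hG hconn hreg hΔ hq hr hqr₁ hqr₂ (hBR n) (hstay n)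
  obtain ⟨v, hv⟩ :=
    hconn.preconnected.exists_lt_dist (hreg.finite_neighborSet (by omega)) s₀ (R + 1)
  obtain ⟨n, hn⟩ := hA v
  exact (hconf n).1 v hv.le hn

end Tree

section Spreading

variable {G : SimpleGraph V} {q r : ℝ}

def IsSpreadingSchedule (G : SimpleGraph V) (S₀ : Set V) (α : ℕ → V) : Prop :=
  (∀ n, ∃ u ∈ G.neighborSet (α n), u ∈ S₀ ∪ α '' Set.Iio n) ∧
    ∀ v, ∃ n, α n = v ∧ G.neighborSet v ⊆ S₀ ∪ α '' Set.Iio n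

theorem exists_isSpreadingSchedule (hG : G.Connected) (hfin : ∀ v, (G.neighborSet v).Finite)
    (hne : ∀ v, (G.neighborSet v).Nonempty) :
    ∃ S₀ α, S₀.Finite ∧ IsSpreadingSchedule G S₀ α := by
  obtain ⟨v₀⟩ := hG.nonempty
  have hball (k : ℕ) := hG.preconnected.finite_setOf_dist_le hfin v₀ k
  -- sweep the balls of radius `0, 1, 2, …` around `v₀`; the seeds cover the first update of `v₀`
  obtain ⟨α, t, ht, hα, hcover⟩ := List.exists_seq_concat (fun k => (hball k).toFinset.toList)
    fun k => List.ne_nil_of_mem (a := v₀) (by simp)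
  simp only [Finset.mem_toList, Set.Finite.mem_toFinset, Set.mem_ofPred_eq] at hα hcover
  have hbefore {k : ℕ} {u : V} (hu : G.dist v₀ u ≤ k) : u ∈ α '' Set.Iio (t (k + 1)) := by
    obtain ⟨n, -, hn, rfl⟩ := hcover k u hu
    exact ⟨n, hn, rfl⟩
  refine ⟨G.neighborSet v₀, α, hfin v₀, fun n => ?_, fun v => ?_⟩
  · obtain ⟨k, hk, hnk⟩ := hα n
    obtain h | h := eq_or_ne v₀ (α n)
    · obtain ⟨u, hu⟩ := hne (α n)
      exact ⟨u, hu, Or.inl (h ▸ hu)⟩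
    obtain ⟨u, hadj, hu⟩ := (hG v₀ (α n)).exists_adj_dist_lt h
    obtain ⟨m, hm, rfl⟩ := hbefore (k := k - 1) (u := u) (by omega)
    exact ⟨α m, hadj, Or.inr ⟨m, lt_of_lt_of_le hm ((ht (by omega)).trans hk), rfl⟩⟩
  · obtain ⟨n, hn, -, rfl⟩ := hcover (G.dist v₀ v + 2) v (by omega)
    refine ⟨n, rfl, fun u hu => Or.inr ?_⟩
    have := hG.dist_triangle (u := v₀) (v := α n) (w := u)
    have := SimpleGraph.dist_eq_one_iff_adj.2 hu
    obtain ⟨m, hm, rfl⟩ := hbefore (k := G.dist v₀ (α n) + 1) (u := u) (by omega)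
    exact ⟨m, lt_of_lt_of_le hm hn, rfl⟩

noncomputable def seedProfile (S₀ : Set V) : V → Strat :=
  open Classical in fun v => if v ∈ S₀ then .A else .B

noncomputable def play (σ₀ : V → Strat) (α : ℕ → V) (rule : (V → Strat) → V → Strat) :
    ℕ → V → Strat
  | 0 => σ₀
  | n + 1 => open Classical in
      Function.update (play σ₀ α rule n) (α n) (rule (play σ₀ α rule n) (α n))

variable {σ₀ : V → Strat} {α : ℕ → V} {rule : (V → Strat) → V → Strat}

theorem play_succ_self (n : ℕ) : play σ₀ α rule (n + 1) (α n) = rule (play σ₀ α rule n) (α n) :=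
  open Classical in Function.update_self ..

theorem play_succ_of_ne {n : ℕ} {v : V} (h : v ≠ α n) :
    play σ₀ α rule (n + 1) v = play σ₀ α rule n v :=
  open Classical in Function.update_of_ne h ..

theorem play_mem {S : Set Strat} (h₀ : ∀ v, σ₀ v ∈ S) (hrule : ∀ τ x, rule τ x ∈ S) (n : ℕ)
    (v : V) : play σ₀ α rule n v ∈ S := by
  induction n generalizing v with
  | zero => exact h₀ v
  | succ n ih =>
    obtain rfl | hv := eq_or_ne v (α n)
    · rw [play_succ_self]; exact hrule _ _
    · rw [play_succ_of_ne hv]; exact ih v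

theorem play_seedProfile_ne_B {S₀ : Set V} (hrule : ∀ τ x, rule τ x ≠ .B) (n : ℕ) :
    ∀ u ∈ S₀ ∪ α '' Set.Iio n, play (seedProfile S₀) α rule n u ≠ .B := by
  induction n with
  | zero => rintro u (hu | ⟨m, hm, -⟩) <;> simp_all [play, seedProfile]
  | succ n ih =>
    intro u hu
    obtain rfl | hun := eq_or_ne u (α n)
    · rw [play_succ_self]; exact hrule _ _
    rw [play_succ_of_ne hun]
    refine ih u (hu.imp_right fun ⟨m, hm, hmu⟩ => ⟨m, ?_, hmu⟩)
    exact lt_of_le_of_ne (Nat.lt_succ_iff.1 hm) (by rintro rfl; exact hun hmu.symm)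

theorem IsSpreadingSchedule.epidemic {S₀ : Set V} (hα : IsSpreadingSchedule G S₀ α)
    (hS₀ : S₀.Finite) (hB : ∀ τ x, rule τ x ≠ .B)
    (hA : ∀ τ x, (∀ u ∈ G.neighborSet x, τ u ≠ .B) → rule τ x = .A)
    (hBR : ∀ n, (∃ u ∈ G.neighborSet (α n), play (seedProfile S₀) α rule n u ≠ .B) →
      IsBestResponse G q r (play (seedProfile S₀) α rule n) (α n)
        (rule (play (seedProfile S₀) α rule n) (α n))) :
    Epidemic G q r := by
  have hnB := play_seedProfile_ne_B (S₀ := S₀) (α := α) hB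
  refine ⟨S₀, α, play (seedProfile S₀) α rule, hS₀, fun v => (hα.2 v).imp fun _ h => h.1,
    fun v hv => if_pos hv, fun v hv => if_neg hv, fun n => ?_, fun n v => play_succ_of_ne,
    fun v => ?_⟩
  · obtain ⟨u, hu, hu₀⟩ := hα.1 n
    rw [play_succ_self]
    exact hBR n ⟨u, hu, hnB n u hu₀⟩
  · obtain ⟨n, rfl, hN⟩ := hα.2 v
    exact ⟨n + 1, by rw [play_succ_self]; exact hA _ _ fun u hu => hnB n u (hN hu)⟩

end Spreading

section Region

variable {G : SimpleGraph V} {Δ : ℕ} {q r : ℝ}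

theorem epidemic_of_mul_le_one (hG : G.Connected) (hreg : IsRegular G Δ) (hΔ : 2 ≤ Δ)
    (hq : 0 < q) (hqΔ : q * Δ ≤ 1) (hrq : q * (Δ - 1) ≤ r * Δ) : Epidemic G q r := by
  obtain ⟨S₀, α, hS₀, hα⟩ := exists_isSpreadingSchedule hG
    (hreg.finite_neighborSet (by omega)) (hreg.nonempty_neighborSet (by omega))
  refine hα.epidemic hS₀ (rule := fun _ _ => .A) (by simp) (fun _ _ _ => rfl) fun n hn => ?_
  have hAB : ∀ v, play (seedProfile S₀) α (fun _ _ => .A) n v ≠ .AB :=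
    play_mem (S := {.AB}ᶜ) (fun v => by unfold seedProfile; split <;> simp) (by simp) n
  refine isBestResponse_A_of_degIn_AB_eq_zero hreg hΔ hq hqΔ hrq
    (degIn_eq_zero fun u _ => hAB u) ?_
  exact (degIn_lt_ncard (hreg.finite_neighborSet (by omega) _) hn).trans_eq (hreg _)

theorem epidemic_of_two_mul_add_le_one (hG : G.Connected) (hreg : IsRegular G Δ) (hΔ : Δ ≠ 0)
    (hq : 0 < q) (hr : 0 < r) (hqr : 2 * q + Δ * r ≤ 1) : Epidemic G q r := by
  obtain ⟨S₀, α, hS₀, hα⟩ := exists_isSpreadingSchedule hG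
    (hreg.finite_neighborSet hΔ) (hreg.nonempty_neighborSet hΔ)
  refine hα.epidemic hS₀ (rule := betterOfAAndAB G Δ q r)
    (fun τ x => by unfold betterOfAAndAB; split <;> simp)
    (fun τ x hx => by
      rw [betterOfAAndAB, degIn_eq_zero (S := τ ⁻¹' {.B}) hx, if_pos (by simp; positivity)])
    fun n hn => ?_
  exact isBestResponse_betterOfAAndAB hreg hΔ hq hr hqr
    ((degIn_lt_ncard (hreg.finite_neighborSet hΔ _) hn).trans_eq (hreg _))

theorem mem_treeRegion_iff (hΔ : 0 < Δ) (hq : 0 < q) (hr : 0 < r) :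
    (q, r) ∈ treeRegion Δ ↔ (q * Δ ≤ 1 ∧ q * (Δ - 1) ≤ r * Δ) ∨ 2 * q + Δ * r ≤ 1 := by
  have hΔ' : (0 : ℝ) < Δ := by exact_mod_cast hΔ
  simp only [treeRegion, Set.mem_union, Set.mem_ofPred_eq, hq, hr, true_and]
  rw [div_mul_eq_mul_div, div_le_iff₀ hΔ', le_div_iff₀ hΔ', mul_comm (Δ - 1 : ℝ), and_comm]

theorem epidemic_of_mem_treeRegion (hG : G.Connected) (hreg : IsRegular G Δ) (hΔ : 2 ≤ Δ)
    (h : (q, r) ∈ treeRegion Δ) : Epidemic G q r := by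
  obtain ⟨hq, hr⟩ : 0 < q ∧ 0 < r := by rcases h with h | h <;> exact ⟨h.1, h.2.1⟩
  rcases (mem_treeRegion_iff (by omega) hq hr).1 h with ⟨hqΔ, hrq⟩ | hqr
  · exact epidemic_of_mul_le_one hG hreg hΔ hq hqΔ hrq
  · exact epidemic_of_two_mul_add_le_one hG hreg (by omega) hq hr hqr

theorem mem_treeRegion_of_epidemic [Infinite V] (hG : G.IsAcyclic) (hconn : G.Connected)
    (hreg : IsRegular G Δ) (hΔ : 2 ≤ Δ) (hq : 0 < q) (hr : 0 < r) (h : Epidemic G q r) :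
    (q, r) ∈ treeRegion Δ := by
  rw [mem_treeRegion_iff (by omega) hq hr]
  by_contra! hout
  exact not_epidemic_of_isAcyclic hG hconn hreg hΔ hq hr hout.2 hout.1 h

end Region

theorem tree_region_minimum_general {W V : Type*} (Δ : ℕ) (hΔ : 2 ≤ Δ)
    (T : SimpleGraph W) (hTInf : Infinite W) (hTConn : T.Connected)
    (hTAcyc : T.IsAcyclic) (hTReg : IsRegular T Δ)
    (G : SimpleGraph V) (hGConn : G.Connected) (hGReg : IsRegular G Δ) :
    epidemicRegion T ⊆ epidemicRegion G := by
  rintro ⟨q, r⟩ ⟨hq, hq1, hr, hT⟩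
  exact ⟨hq, hq1, hr, epidemic_of_mem_treeRegion hGConn hGReg hΔ
    (mem_treeRegion_of_epidemic hTAcyc hTConn hTReg hΔ hq hr hT)⟩

/-- The epidemic region of the infinite `Δ`-regular tree `T_Δ` is contained in
the epidemic region of every connected infinite `Δ`-regular graph `G`: whenever `A` becomes
epidemic in `(T_Δ, q, r)`, it also becomes epidemic in `(G, q, r)`. -/
theorem tree_region_minimum {W V : Type*} (Δ : ℕ) (hΔ : 2 ≤ Δ)
    (T : SimpleGraph W) (hTInf : Infinite W) (hTConn : T.Connected)
    (hTAcyc : T.IsAcyclic) (hTReg : IsRegular T Δ)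
    (G : SimpleGraph V) (hGInf : Infinite V) (hGConn : G.Connected) (hGReg : IsRegular G Δ) :
    epidemicRegion T ⊆ epidemicRegion G :=
  tree_region_minimum_general Δ hΔ T hTInf hTConn hTAcyc hTReg G hGConn hGReg

end Contagion
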